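/- arXiv:1511.08528 — 7 statements merged into one kernel-verified Lean document; each statement's English description precedes it below -/
import Mathlib

section
/- Let x ∈ ℝ^d be a fixed vector and ε ∈ (0,1). Let Ω ∈ ℝ^{r×d} be a random matrix whose entries are independent standard normal N(0,1) random variables. Then P( (1−ε)‖x‖₂² ≤ ‖(1/√r)·Ωx‖₂² ≤ (1+ε)‖x‖₂² ) ≥ 1 − 2·exp(−(ε²−ε³)r/4). -/
/-!
For each row, `∑ j, Ω i j * x j` is `N(0, ‖x‖²)`, so `‖Ω x‖²` is `‖x‖²` times a `χ²_r` variable,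
with moment generating function `t ↦ (1 - 2 t ‖x‖²)^(-r/2)`. Chernoff's bound at
`t = ±ε / (2 (1 ± ε) ‖x‖²)` bounds each tail by `exp (r/2 · (log (1 ± ε) ∓ ε))`, and
`log (1 ± ε) ∓ ε ≤ -(ε² - ε³)/2`.
-/

open MeasureTheory ProbabilityTheory Real
open scoped NNReal

/-- The law of an `r × d` random matrix with independent standard normal
`N(0,1)` entries: the product Gaussian measure on `Fin r → Fin d → ℝ`. -/
noncomputable def gaussMatrix (r d : ℕ) : Measure (Fin r → Fin d → ℝ) :=
  Measure.pi fun _ : Fin r => Measure.pi fun _ : Fin d => gaussianReal 0 1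

lemma map_pi_gaussianReal_sum_mul {ι : Type*} [Fintype ι] (x : ι → ℝ) :
    (Measure.pi fun _ : ι => gaussianReal 0 1).map (fun ω => ∑ j, ω j * x j) =
      gaussianReal 0 (∑ j, x j ^ 2).toNNReal := by
  let L : StrongDual ℝ (EuclideanSpace ℝ ι) := innerSL ℝ (WithLp.toLp 2 x)
  have hL : (fun ω : ι → ℝ => ∑ j, ω j * x j) = L ∘ WithLp.toLp 2 := by
    ext ω; simp [L, PiLp.inner_apply, mul_comm]
  rw [hL, ← Measure.map_map L.continuous.measurable (by fun_prop), map_pi_eq_stdGaussian,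
    IsGaussian.map_eq_gaussianReal, integral_strongDual_stdGaussian, variance_dual_stdGaussian,
    innerSL_apply_norm, EuclideanSpace.real_norm_sq_eq]

lemma gaussianPDFReal_mul_exp_mul_sq {v : ℝ≥0} (hv : v ≠ 0) (t y : ℝ) :
    gaussianPDFReal 0 v y * exp (t * y ^ 2) =
      (√(2 * π * v))⁻¹ * exp (-((2 * (v : ℝ))⁻¹ - t) * y ^ 2) := by
  rw [gaussianPDFReal, mul_assoc, ← exp_add]
  congr 2
  have : (v : ℝ) ≠ 0 := by exact_mod_cast hv
  field_simp
  ring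

/-- For `1 ≤ 2 * t * v` both sides are junk `0`. -/
lemma mgf_sq_gaussianReal (v : ℝ≥0) (t : ℝ) :
    mgf (fun y => y ^ 2) (gaussianReal 0 v) t = (√(1 - 2 * t * v))⁻¹ := by
  rcases eq_or_ne v 0 with rfl | hv
  · simp [mgf, gaussianReal_zero_var]
  rw [mgf, integral_gaussianReal_eq_integral_smul hv]
  simp_rw [smul_eq_mul, gaussianPDFReal_mul_exp_mul_sq hv, integral_const_mul, integral_gaussian]
  rw [← sqrt_inv, ← sqrt_mul (by positivity), ← sqrt_inv]
  congr 1
  field_simp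

lemma integrable_exp_mul_sq_gaussianReal {v : ℝ≥0} {t : ℝ} (ht : 2 * t * v < 1) :
    Integrable (fun y => exp (t * y ^ 2)) (gaussianReal 0 v) := by
  refine Integrable.of_integral_ne_zero ?_
  rw [← mgf, mgf_sq_gaussianReal]
  have : 0 < 1 - 2 * t * v := by linarith
  positivity

section Pi

variable {ι E : Type*} [Fintype ι] {mE : MeasurableSpace E} {μ : Measure E} [SigmaFinite μ]
  {X : E → ℝ} {t : ℝ}

lemma integrable_exp_mul_pi_sum (h : Integrable (fun y => exp (t * X y)) μ) :
    Integrable (fun ω => exp (t * ∑ i, X (ω i))) (Measure.pi fun _ : ι => μ) := by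
  simp_rw [Finset.mul_sum, exp_sum]
  exact Integrable.fintype_prod fun _ => h

lemma mgf_pi_sum :
    mgf (fun ω => ∑ i, X (ω i)) (Measure.pi fun _ : ι => μ) t = mgf X μ t ^ Fintype.card ι := by
  simp_rw [mgf, Finset.mul_sum, exp_sum]
  exact integral_fintype_prod_eq_pow (fun y => exp (t * X y))

end Pi

section GaussMatrix

variable {r d : ℕ} (x : Fin d → ℝ) {t : ℝ}

instance : IsProbabilityMeasure (gaussMatrix r d) := by
  unfold gaussMatrix; infer_instance

lemma mgf_sq_sum_mul_pi_gaussianReal :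
    mgf (fun ω => (∑ j, ω j * x j) ^ 2) (Measure.pi fun _ : Fin d => gaussianReal 0 1) t =
      (√(1 - 2 * t * ∑ j, x j ^ 2))⁻¹ := by
  have hq : ((∑ j, x j ^ 2).toNNReal : ℝ) = ∑ j, x j ^ 2 := Real.coe_toNNReal _ (by positivity)
  rw [← Function.comp_def (fun y : ℝ => y ^ 2),
    ← mgf_map (Measurable.aemeasurable (by fun_prop)) (by fun_prop),
    map_pi_gaussianReal_sum_mul, mgf_sq_gaussianReal, hq]

lemma integrable_exp_mul_sq_sum_mul_pi_gaussianReal (ht : 2 * t * ∑ j, x j ^ 2 < 1) :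
    Integrable (fun ω => exp (t * (∑ j, ω j * x j) ^ 2))
      (Measure.pi fun _ : Fin d => gaussianReal 0 1) := by
  have hq : ((∑ j, x j ^ 2).toNNReal : ℝ) = ∑ j, x j ^ 2 := Real.coe_toNNReal _ (by positivity)
  have := integrable_exp_mul_sq_gaussianReal (v := (∑ j, x j ^ 2).toNNReal) (t := t) (by rwa [hq])
  rw [← map_pi_gaussianReal_sum_mul, integrable_map_measure (by fun_prop)
    (Measurable.aemeasurable (by fun_prop))] at this
  exact this

lemma mgf_sum_sq_gaussMatrix :
    mgf (fun Ω => ∑ i, (∑ j, Ω i j * x j) ^ 2) (gaussMatrix r d) t =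
      (√(1 - 2 * t * ∑ j, x j ^ 2))⁻¹ ^ r := by
  rw [gaussMatrix, mgf_pi_sum (X := fun ω : Fin d → ℝ => (∑ j, ω j * x j) ^ 2),
    mgf_sq_sum_mul_pi_gaussianReal, Fintype.card_fin]

lemma integrable_exp_mul_sum_sq_gaussMatrix (ht : 2 * t * ∑ j, x j ^ 2 < 1) :
    Integrable (fun Ω => exp (t * ∑ i, (∑ j, Ω i j * x j) ^ 2)) (gaussMatrix r d) :=
  integrable_exp_mul_pi_sum (integrable_exp_mul_sq_sum_mul_pi_gaussianReal x ht)

end GaussMatrix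

lemma log_one_add_sub_le {ε : ℝ} (hε : 0 ≤ ε) : log (1 + ε) - ε ≤ -(ε ^ 2 - ε ^ 3) / 2 := by
  have ha : 0 ≤ ε - ε ^ 2 / 2 + ε ^ 3 / 2 := by nlinarith [sq_nonneg (ε - 1)]
  have h1 : 1 + ε ≤ exp (ε - ε ^ 2 / 2 + ε ^ 3 / 2) := by
    nlinarith [quadratic_le_exp_of_nonneg ha, sq_nonneg (ε - ε ^ 2 / 2), pow_nonneg hε 3,
      pow_nonneg hε 4]
  linarith [(log_le_iff_le_exp (by linarith)).2 h1]

lemma log_one_sub_add_le {ε : ℝ} (h0 : 0 ≤ ε) (h1 : ε < 1) :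
    log (1 - ε) + ε ≤ -(ε ^ 2 - ε ^ 3) / 2 := by
  have hsum := sum_le_hasSum (Finset.range 2) (fun n _ => by positivity)
    (hasSum_pow_div_log_of_abs_lt_one (by rwa [abs_of_nonneg h0]))
  norm_num [Finset.sum_range_succ] at hsum
  nlinarith [pow_nonneg h0 3]

lemma exp_neg_mul_mul_sqrt_inv_pow_eq {s q t : ℝ} (hs : -1 < s) (ht : 2 * (1 + s) * q * t = s)
    (r : ℕ) :
    exp (-t * ((1 + s) * q * r)) * (√(1 - 2 * t * q))⁻¹ ^ r = exp (r / 2 * (log (1 + s) - s)) := by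
  have h1s : 0 < 1 + s := by linarith
  have hvar : 1 - 2 * t * q = (1 + s)⁻¹ := by
    refine eq_inv_of_mul_eq_one_left ?_; linear_combination -ht
  have hsqrt : √(1 + s) = exp (log (1 + s) / 2) := by
    rw [← log_sqrt h1s.le, exp_log (sqrt_pos.2 h1s)]
  rw [hvar, sqrt_inv, inv_inv, hsqrt, ← exp_nat_mul, ← exp_add]
  congr 1
  linear_combination (-(r : ℝ) / 2) * ht

section Tails

variable {r d : ℕ} (x : Fin d → ℝ) {ε : ℝ}

lemma measureReal_sum_sq_ge_le (hε : 0 < ε) (hq : 0 < ∑ j, x j ^ 2) :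
    (gaussMatrix r d).real {Ω | (1 + ε) * (∑ j, x j ^ 2) * r ≤ ∑ i, (∑ j, Ω i j * x j) ^ 2} ≤
      exp (-((ε ^ 2 - ε ^ 3) * r) / 4) := by
  set q := ∑ j, x j ^ 2
  set t := ε / (2 * (1 + ε) * q)
  have hεt : 2 * (1 + ε) * q * t = ε := by simp only [t]; field_simp
  have ht : 2 * t * q < 1 := by
    have : 0 < 1 + ε := by linarith
    nlinarith
  calc _ ≤ exp (-t * ((1 + ε) * q * r)) * mgf (fun Ω => ∑ i, (∑ j, Ω i j * x j) ^ 2)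
          (gaussMatrix r d) t :=
        measure_ge_le_exp_mul_mgf _ (by positivity) (integrable_exp_mul_sum_sq_gaussMatrix x ht)
    _ = exp (r / 2 * (log (1 + ε) - ε)) := by
        rw [mgf_sum_sq_gaussMatrix, exp_neg_mul_mul_sqrt_inv_pow_eq (by linarith) hεt]
    _ ≤ _ := by
        refine exp_le_exp.2 ?_
        nlinarith [log_one_add_sub_le hε.le, (Nat.cast_nonneg r : (0 : ℝ) ≤ r)]

lemma measureReal_sum_sq_le_le (hε0 : 0 < ε) (hε1 : ε < 1) (hq : 0 < ∑ j, x j ^ 2) :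
    (gaussMatrix r d).real {Ω | ∑ i, (∑ j, Ω i j * x j) ^ 2 ≤ (1 - ε) * (∑ j, x j ^ 2) * r} ≤
      exp (-((ε ^ 2 - ε ^ 3) * r) / 4) := by
  set q := ∑ j, x j ^ 2
  set t := -ε / (2 * (1 - ε) * q)
  have hεt : 2 * (1 + -ε) * q * t = -ε := by
    have : 1 - ε ≠ 0 := by linarith
    simp only [t]; field_simp; ring
  have ht : 2 * t * q < 1 := by nlinarith
  rw [show 1 - ε = 1 + -ε by ring]
  calc _ ≤ exp (-t * ((1 + -ε) * q * r)) * mgf (fun Ω => ∑ i, (∑ j, Ω i j * x j) ^ 2)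
          (gaussMatrix r d) t :=
        measure_le_le_exp_mul_mgf _ (div_nonpos_of_nonpos_of_nonneg (by linarith)
          (by nlinarith)) (integrable_exp_mul_sum_sq_gaussMatrix x ht)
    _ = exp (r / 2 * (log (1 + -ε) - -ε)) := by
        rw [mgf_sum_sq_gaussMatrix, exp_neg_mul_mul_sqrt_inv_pow_eq (by linarith) hεt]
    _ ≤ _ := by
        refine exp_le_exp.2 ?_
        rw [← sub_eq_add_neg, sub_neg_eq_add]
        nlinarith [log_one_sub_add_le hε0.le hε1, (Nat.cast_nonneg r : (0 : ℝ) ≤ r)]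

end Tails

lemma ofReal_one_sub_two_mul_le_measure {α : Type*} [MeasurableSpace α] {μ : Measure α}
    [IsProbabilityMeasure μ] {E A B : Set α} {p : ℝ} (hcover : Eᶜ ⊆ A ∪ B) (hA : μ.real A ≤ p)
    (hB : μ.real B ≤ p) : ENNReal.ofReal (1 - 2 * p) ≤ μ E := by
  rw [← ofReal_measureReal]
  refine ENNReal.ofReal_le_ofReal ?_
  have hunion : μ.real Set.univ ≤ μ.real (E ∪ (A ∪ B)) :=
    measureReal_mono fun ω _ => (em (ω ∈ E)).imp id (hcover ·)
  linarith [probReal_univ (μ := μ), measureReal_union_le (μ := μ) E (A ∪ B),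
    measureReal_union_le (μ := μ) A B]

/-- two-sided Johnson–Lindenstrauss bound.
For a fixed `x ∈ ℝ^d`, `ε ∈ (0,1)`, and a random `Ω ∈ ℝ^{r×d}` with iid
`N(0,1)` entries,
`P((1−ε)‖x‖₂² ≤ ‖(1/√r)Ωx‖₂² ≤ (1+ε)‖x‖₂²) ≥ 1 − 2·exp(−(ε²−ε³)r/4)`. -/
theorem stmt4 (d r : ℕ) (x : Fin d → ℝ) (ε : ℝ) (hε0 : 0 < ε) (hε1 : ε < 1) :
    gaussMatrix r d {Ω | (1 - ε) * (∑ j, x j ^ 2) ≤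
          (∑ i : Fin r, ((1 / Real.sqrt r) * ∑ j, Ω i j * x j) ^ 2) ∧
        (∑ i : Fin r, ((1 / Real.sqrt r) * ∑ j, Ω i j * x j) ^ 2) ≤
          (1 + ε) * (∑ j, x j ^ 2)} ≥
      ENNReal.ofReal (1 - 2 * Real.exp (-((ε ^ 2 - ε ^ 3) * r) / 4)) := by
  rcases (by positivity : (0 : ℝ) ≤ ∑ j, x j ^ 2).eq_or_lt with hq | hq
  · obtain rfl : x = 0 := funext fun j => by
      simpa using (Finset.sum_eq_zero_iff_of_nonneg fun j _ => sq_nonneg (x j)).1 hq.symm j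
        (Finset.mem_univ j)
    simp [exp_nonneg]
  rcases r.eq_zero_or_pos with rfl | hr
  · norm_num [ENNReal.ofReal_of_nonpos]
  have hnorm (Ω : Fin r → Fin d → ℝ) :
      ∑ i, ((1 / √r) * ∑ j, Ω i j * x j) ^ 2 = (∑ i, (∑ j, Ω i j * x j) ^ 2) / r := by
    simp_rw [mul_pow, div_pow, one_pow, sq_sqrt (Nat.cast_nonneg r), Finset.sum_div]
    exact Finset.sum_congr rfl fun i _ => by ring
  have hr' : (0 : ℝ) < r := Nat.cast_pos.2 hr
  refine ofReal_one_sub_two_mul_le_measure ?_ (measureReal_sum_sq_ge_le x hε0 hq)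
    (measureReal_sum_sq_le_le x hε0 hε1 hq)
  intro Ω hΩ
  simp only [Set.mem_compl_iff, Set.mem_ofPred_eq, hnorm, le_div_iff₀ hr', div_le_iff₀ hr',
    not_and_or, not_le] at hΩ
  rcases hΩ with h | h
  · exact Or.inr h.le
  · exact Or.inl h.le
end

section
/- Let n ≥ 1 and define W, L, U ∈ ℝ^{n×n} by: W(i,i) = 1, W(i,j) = −1 for i > j, W(i,n) = 1 for i < n, and W(i,j) = 0 otherwise; L(i,i) = 1, L(i,j) = −1 for i > j, L(i,j) = 0 for i < j; U(i,i) = 1 for i < n, U(i,n) = 2^{i−1} for all i (so U(n,n) = 2^{n−1}), and U(i,j) = 0 otherwise. Then W = L·U; consequently max_{i,j}|U(i,j)| = 2^{n−1} = 2^{n−1}·max_{i,j}|W(i,j)| and ‖U(:,n)‖₂ /‖W(:,n)‖₂ ≥ 2^{n−1}/√n. -/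
/-! The column `(2^k)ₖ` of `U` is mapped by `L` to the all-ones column, because
`2^i - (1 + 2 + ⋯ + 2^{i-1}) = 1`; every other column of `U` is a unit vector, so
`L·U` agrees with `L`, hence with `W`, off the last column. The entries of `U` are
at most `2^{n-1}`, attained at the bottom of the last column, while those of `W` are
at most `1`; the column-norm bound compares `‖U(:,n)‖₂ ≥ |U(n,n)|` with `‖W(:,n)‖₂ = √n`. -/

open Finset

theorem two_pow_sub_sum_range_two_pow {R : Type*} [CommRing R] (i : ℕ) :
    (2 : R) ^ i - ∑ k ∈ range i, (2 : R) ^ k = 1 := by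
  linear_combination -geom_sum_mul (2 : R) i

theorem sum_range_lowerNeg_mul_two_pow {R : Type*} [CommRing R] {i n : ℕ} (hi : i < n) :
    ∑ k ∈ range n, (if i = k then (1 : R) else if k < i then -1 else 0) * 2 ^ k = 1 := by
  obtain ⟨m, rfl⟩ := Nat.exists_eq_add_of_le (Nat.succ_le_of_lt hi)
  rw [sum_range_add, sum_range_succ, if_pos rfl,
    sum_eq_zero (s := range m) fun k _ => by rw [if_neg (by omega), if_neg (by omega), zero_mul],
    sum_congr (s₁ := range i) rfl fun k hk => by
      rw [if_neg (by have := mem_range.1 hk; omega), if_pos (mem_range.1 hk), neg_one_mul],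
    sum_neg_distrib]
  linear_combination two_pow_sub_sum_range_two_pow (R := R) i

theorem sum_fin_lowerNeg_mul_two_pow {R : Type*} [CommRing R] {n : ℕ} (i : Fin n) :
    ∑ k : Fin n, (if i = k then (1 : R) else if k < i then -1 else 0) * 2 ^ (k : ℕ) = 1 := by
  simp only [Fin.ext_iff, Fin.lt_def]
  rw [Fin.sum_univ_eq_sum_range
    (fun k => (if (i : ℕ) = k then (1 : R) else if k < i then -1 else 0) * 2 ^ k)]
  exact sum_range_lowerNeg_mul_two_pow i.isLt

theorem Matrix.mul_apply_of_col_eq_one {m n R : Type*} [Fintype n] [DecidableEq n] [Semiring R]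
    (L : Matrix m n R) {U : Matrix n n R} {j : n} (hU : ∀ k, U k j = (1 : Matrix n n R) k j)
    (i : m) : (L * U) i j = L i j := by
  rw [mul_apply, sum_congr rfl fun k _ => by rw [hU k], ← mul_apply, Matrix.mul_one]

theorem abs_le_sqrt_sum_sq {ι : Type*} [Fintype ι] (f : ι → ℝ) (i : ι) :
    |f i| ≤ √(∑ j, f j ^ 2) :=
  Real.abs_le_sqrt (single_le_sum (fun j _ => sq_nonneg (f j)) (mem_univ i))

theorem ciSup_ciSup_eq_of_le_of_eq {α ι κ : Type*} [ConditionallyCompleteLattice α]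
    {f : ι → κ → α} {c : α} (hle : ∀ i j, f i j ≤ c) {i₀ : ι} {j₀ : κ} (h : f i₀ j₀ = c) :
    ⨆ i, ⨆ j, f i j = c := by
  have : Nonempty ι := ⟨i₀⟩
  have : Nonempty κ := ⟨j₀⟩
  have inner_le : ∀ i, ⨆ j, f i j ≤ c := fun i => ciSup_le (hle i)
  refine le_antisymm (ciSup_le inner_le) ?_
  calc c = f i₀ j₀ := h.symm
    _ ≤ ⨆ j, f i₀ j := le_ciSup ⟨c, Set.forall_mem_range.2 (hle i₀)⟩ j₀
    _ ≤ ⨆ i, ⨆ j, f i j := le_ciSup ⟨c, Set.forall_mem_range.2 inner_le⟩ i₀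

/-- the Wilkinson matrix and its LU factorization.
With `W` the Wilkinson matrix (ones on the diagonal and in the last column,
`−1` below the diagonal, zeros elsewhere), `L` unit lower triangular with
`−1` below the diagonal, and `U` the identity except that its last column is
`(1, 2, 2², …, 2^{n−1})ᵀ`, one has `W = L·U`; consequently
`max_{i,j}|U(i,j)| = 2^{n−1} = 2^{n−1}·max_{i,j}|W(i,j)|` and
`‖U(:,n)‖₂/‖W(:,n)‖₂ ≥ 2^{n−1}/√n`. -/
theorem stmt8 (n : ℕ) (hn : 1 ≤ n)
    (W L U : Matrix (Fin n) (Fin n) ℝ)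
    (hW : ∀ i j, W i j =
      if j.val = n - 1 then 1 else if i = j then 1 else if j < i then -1 else 0)
    (hL : ∀ i j, L i j = if i = j then 1 else if j < i then -1 else 0)
    (hU : ∀ i j, U i j =
      if j.val = n - 1 then 2 ^ i.val else if i = j then 1 else 0) :
    W = L * U ∧
      (⨆ i, ⨆ j, |U i j|) = 2 ^ (n - 1) ∧
      (⨆ i, ⨆ j, |U i j|) = 2 ^ (n - 1) * (⨆ i, ⨆ j, |W i j|) ∧
      Real.sqrt (∑ i, U i ⟨n - 1, by omega⟩ ^ 2) /
          Real.sqrt (∑ i, W i ⟨n - 1, by omega⟩ ^ 2) ≥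
        2 ^ (n - 1) / Real.sqrt n := by
  set last : Fin n := ⟨n - 1, by omega⟩
  have hUlast : U last last = 2 ^ (n - 1) := by simp [hU, last]
  have hUmax : ⨆ i, ⨆ j, |U i j| = 2 ^ (n - 1) := by
    refine ciSup_ciSup_eq_of_le_of_eq (fun i j => ?_) (i₀ := last) (j₀ := last) (by simp [hUlast])
    rw [hU]
    split_ifs
    · rw [abs_of_pos (by positivity)]; exact pow_le_pow_right₀ one_le_two (by omega)
    · rw [abs_one]; exact one_le_pow₀ one_le_two
    · rw [abs_zero]; positivity
  have hWmax : ⨆ i, ⨆ j, |W i j| = 1 :=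
    ciSup_ciSup_eq_of_le_of_eq (fun i j => by rw [hW]; split_ifs <;> norm_num)
      (i₀ := last) (j₀ := last) (by simp [hW, last])
  have hWcol : ∑ i, W i last ^ 2 = n := by simp [hW, last]
  refine ⟨?_, hUmax, by rw [hUmax, hWmax, mul_one], ?_⟩
  · ext i j
    by_cases hj : j.val = n - 1
    · rw [hW, if_pos hj, Matrix.mul_apply]
      simp only [hL, hU, hj, if_true]
      exact (sum_fin_lowerNeg_mul_two_pow i).symm
    · rw [L.mul_apply_of_col_eq_one (fun k => by rw [hU, if_neg hj, Matrix.one_apply]), hW, hL,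
        if_neg hj]
  · rw [hWcol, ge_iff_le, ← hUlast]
    gcongr
    exact (le_abs_self _).trans (abs_le_sqrt_sum_sq (fun i => U i last) last)
end

section
/- Let S ∈ ℝ^{d×m} be a matrix with columns S(:,1),...,S(:,m), let Ω ∈ ℝ^{r×d}, let ε ∈ (0,1), g ∈ (0,1], and let α ∈ {1,...,m} be an index such that g·‖Ω·S(:,α)‖₂ ≥ ‖Ω·S(:,j)‖₂ for every j. Suppose moreover that ‖(1/√r)·Ω·S(:,α)‖₂ ≤ √(1+ε)·‖S(:,α)‖₂ and that √(1−ε)·‖S(:,j)‖₂ ≤ ‖(1/√r)·Ω·S(:,j)‖₂ for every j ≠ α. Then max_{1≤j≤m} ‖S(:,j)‖₂ ≤ (1/g)·√((1+ε)/(1−ε))·‖S(:,α)‖₂. -/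
/-!
For `j ≠ α` the three hypotheses chain into
`√(1-ε)‖S_j‖ ≤ ‖ΩS_j‖/√r ≤ g‖ΩS_α‖/√r ≤ g√(1+ε)‖S_α‖`,
and `g ≤ 1 ≤ 1/g` turns the resulting factor `g` into `1/g`.
For `j = α` it suffices that the factor `(1/g)√((1+ε)/(1-ε))` is at least `1`.
-/

open Matrix

theorem sqrt_sum_sq_smul {ι : Type*} [Fintype ι] (c : ℝ) (v : ι → ℝ) :
    Real.sqrt (∑ i, (c • v) i ^ 2) = |c| * Real.sqrt (∑ i, v i ^ 2) := by
  simp only [Pi.smul_apply, smul_eq_mul, mul_pow, ← Finset.mul_sum]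
  rw [Real.sqrt_mul (sq_nonneg c), Real.sqrt_sq_eq_abs]

theorem one_le_one_div_mul_sqrt_div {ε g : ℝ} (hε0 : 0 ≤ ε) (hε1 : ε < 1)
    (hg0 : 0 < g) (hg1 : g ≤ 1) :
    1 ≤ 1 / g * Real.sqrt ((1 + ε) / (1 - ε)) := by
  refine one_le_mul_of_one_le_of_one_le (one_le_one_div hg0 hg1) (Real.one_le_sqrt.mpr ?_)
  rw [one_le_div (by linarith)]
  linarith

section SketchedPivot

/- `a j` and `b j` play the true and the sketched norm of the `j`-th column,
`c` the scaling `1/√r` of the sketch. -/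
variable {ι : Type*} {a b : ι → ℝ} {c ε g : ℝ} {α : ι}

theorem mul_le_mul_of_sketched_pivot (hc : 0 ≤ c) (hg0 : 0 ≤ g)
    (hα : ∀ j, b j ≤ g * b α) (hupper : c * b α ≤ Real.sqrt (1 + ε) * a α)
    {j : ι} (hlower : Real.sqrt (1 - ε) * a j ≤ c * b j) :
    Real.sqrt (1 - ε) * a j ≤ g * (Real.sqrt (1 + ε) * a α) :=
  calc Real.sqrt (1 - ε) * a j
      ≤ c * b j := hlower
    _ ≤ c * (g * b α) := mul_le_mul_of_nonneg_left (hα j) hc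
    _ = g * (c * b α) := by ring
    _ ≤ g * (Real.sqrt (1 + ε) * a α) := mul_le_mul_of_nonneg_left hupper hg0

theorem le_of_sketched_pivot (hc : 0 ≤ c) (hε0 : 0 ≤ ε) (hε1 : ε < 1)
    (hg0 : 0 < g) (hg1 : g ≤ 1) (ha : 0 ≤ a α)
    (hα : ∀ j, b j ≤ g * b α) (hupper : c * b α ≤ Real.sqrt (1 + ε) * a α)
    (hlower : ∀ j, j ≠ α → Real.sqrt (1 - ε) * a j ≤ c * b j) (j : ι) :
    a j ≤ 1 / g * Real.sqrt ((1 + ε) / (1 - ε)) * a α := by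
  have hK := one_le_one_div_mul_sqrt_div hε0 hε1 hg0 hg1
  rcases eq_or_ne j α with rfl | hj
  · exact le_mul_of_one_le_left ha hK
  have hsqrt : 0 < Real.sqrt (1 - ε) := Real.sqrt_pos.mpr (by linarith)
  have hchain := mul_le_mul_of_sketched_pivot hc hg0.le hα hupper (hlower j hj)
  calc a j
      ≤ g * (Real.sqrt (1 + ε) * a α) / Real.sqrt (1 - ε) := by
        rw [le_div_iff₀ hsqrt]; linarith
    _ = g * Real.sqrt ((1 + ε) / (1 - ε)) * a α := by
        rw [Real.sqrt_div' _ (by linarith)]; ring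
    _ ≤ 1 / g * Real.sqrt ((1 + ε) / (1 - ε)) * a α := by
        gcongr
        exact hg1.trans (one_le_one_div hg0 hg1)

end SketchedPivot

/-- deterministic core of the randomized norm-preservation
lemma for GERCP.  If the sketched pivot column `Ω·S(:,α)` is, up to the
threshold factor `g`, the largest sketched column, the pivot column satisfies
the upper ε-JL bound, and every other column satisfies the lower ε-JL bound,
then `max_j ‖S(:,j)‖₂ ≤ (1/g)·√((1+ε)/(1−ε))·‖S(:,α)‖₂`. -/
theorem stmt10 (d m r : ℕ) (S : Matrix (Fin d) (Fin m) ℝ)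
    (Ω : Matrix (Fin r) (Fin d) ℝ) (ε g : ℝ)
    (hε0 : 0 < ε) (hε1 : ε < 1) (hg0 : 0 < g) (hg1 : g ≤ 1)
    (α : Fin m)
    (hα : ∀ j : Fin m,
      Real.sqrt (∑ i, (Ω *ᵥ fun k => S k j) i ^ 2) ≤
        g * Real.sqrt (∑ i, (Ω *ᵥ fun k => S k α) i ^ 2))
    (hupper : Real.sqrt (∑ i, ((1 / Real.sqrt r) • (Ω *ᵥ fun k => S k α)) i ^ 2) ≤
      Real.sqrt (1 + ε) * Real.sqrt (∑ k, S k α ^ 2))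
    (hlower : ∀ j : Fin m, j ≠ α →
      Real.sqrt (1 - ε) * Real.sqrt (∑ k, S k j ^ 2) ≤
        Real.sqrt (∑ i, ((1 / Real.sqrt r) • (Ω *ᵥ fun k => S k j)) i ^ 2)) :
    ∀ j : Fin m, Real.sqrt (∑ k, S k j ^ 2) ≤
      (1 / g) * Real.sqrt ((1 + ε) / (1 - ε)) * Real.sqrt (∑ k, S k α ^ 2) := by
  have hc : 0 ≤ 1 / Real.sqrt r := by positivity
  simp only [sqrt_sum_sq_smul, abs_of_nonneg hc] at hupper hlower
  exact le_of_sketched_pivot hc hε0.le hε1 hg0 hg1 (Real.sqrt_nonneg _) hα hupper hlower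
end

section
/- Let n ≥ 1 and τ ≥ 1 be real, and let c_1, ..., c_n be positive reals satisfying, for all integers 1 ≤ k ≤ m ≤ n, the inequality ∏_{j=k}^{m} c_j ≤ τ^{m−k} · √((n−k+1)!/(n−m)!) · c_k^{m−k+1}. Then for every 1 < m ≤ n, c_m / c_1 ≤ √(n−m+1) · f(m, n−m) · τ · (m−1)^{ln τ}, where f(m,t) = √( (2+t)·(3+t)^{1/2}·(4+t)^{1/3} ··· (m+t)^{1/(m−1)} ) is the generalized Wilkinson function. -/
/-!
With `x_j = log c_j`, the hypothesis for the block `k, …, m` reads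
`∑_{j=k}^m (x_j - x_k) ≤ (m-k) log τ + ½ ∑_{i=k}^m log (n-i+1)`.
Wilkinson's weights `w_1 = 1/(m-1)`, `w_k = 1/((m-k)(m-k+1))` combine the left-hand sides over
`k = 1, …, m-1` into exactly `x_m - x_1`. On the right they turn `(m-k) log τ` into
`H_{m-1} log τ ≤ (1 + log (m-1)) log τ`, and the factorial terms into
`½ log ((n-m+1) f(m, n-m)²)`.
-/

/-- The generalized Wilkinson function
`f(m,t) = √((2+t)·(3+t)^{1/2}·(4+t)^{1/3}···(m+t)^{1/(m−1)})`. -/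
noncomputable def genWilkinson (m : ℕ) (t : ℝ) : ℝ :=
  Real.sqrt (∏ k ∈ Finset.Icc 2 m, ((k : ℝ) + t) ^ ((1 : ℝ) / ((k : ℝ) - 1)))

open Finset Real
open scoped Nat

/-- If `u_k` is the mean of `x_k, …, x_m`, then `w_k ∑_{j=k}^m (x_j - x_k)` equals `u_2 - x_1`
for `k = 1` and `u_{k+1} - u_k` for `k ≥ 2`, so these weighted sums telescope. -/
noncomputable def wilkinsonWeight (m k : ℕ) : ℝ :=
  if k = 1 then 1 / ((m : ℝ) - 1) else 1 / (((m : ℝ) - k) * ((m : ℝ) - k + 1))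

lemma wilkinsonWeight_nonneg {m k : ℕ} (hk : k < m) : 0 ≤ wilkinsonWeight m k := by
  have hkm : (k : ℝ) + 1 ≤ m := by exact_mod_cast hk
  unfold wilkinsonWeight
  split_ifs with hk1
  · subst hk1
    exact div_nonneg zero_le_one (by push_cast at hkm; linarith)
  · exact div_nonneg zero_le_one (mul_nonneg (by linarith) (by linarith))

lemma sum_Ico_wilkinsonWeight {m j : ℕ} (hj : 2 ≤ j) (hjm : j ≤ m) :
    ∑ k ∈ Ico 1 j, wilkinsonWeight m k = 1 / ((m : ℝ) - j + 1) := by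
  induction j, hj using Nat.le_induction with
  | base =>
    norm_num [wilkinsonWeight]
    ring
  | succ j hj ih =>
    have hjm' : (j : ℝ) + 1 ≤ m := by exact_mod_cast hjm
    have hmj : (m : ℝ) - j ≠ 0 := by linarith
    have hmj' : (m : ℝ) - j + 1 ≠ 0 := by linarith
    rw [sum_Ico_succ_top (by omega), ih (by omega), wilkinsonWeight, if_neg (by omega),
      show (m : ℝ) - (j + 1 : ℕ) + 1 = m - j by push_cast; ring]
    field_simp

lemma wilkinsonWeight_mul_sub_add_one {m k : ℕ} (hk : k ∈ Ico 1 m) :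
    wilkinsonWeight m k * ((m : ℝ) - k + 1) = 1 / ((m : ℝ) - k) + if k = 1 then 1 else 0 := by
  rw [mem_Ico] at hk
  have hkm : (k : ℝ) + 1 ≤ m := by exact_mod_cast hk.2
  have hmk : (m : ℝ) - k ≠ 0 := by linarith
  have hmk' : (m : ℝ) - k + 1 ≠ 0 := by linarith
  unfold wilkinsonWeight
  split_ifs with hk1
  · subst hk1
    simp only [Nat.cast_one] at hmk ⊢
    field_simp
    ring
  · field_simp
    ring

lemma sum_wilkinsonWeight_mul_sum_Icc {m : ℕ} (hm : 2 ≤ m) (h : ℕ → ℝ) :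
    ∑ k ∈ Ico 1 m, wilkinsonWeight m k * ∑ i ∈ Icc k m, h i
      = h m + ∑ i ∈ Ico 1 m, h i / ((m : ℝ) - i) := by
  calc _ = ∑ k ∈ Ico 1 m, ∑ i ∈ Ico k m, wilkinsonWeight m k * h i
          + (∑ k ∈ Ico 1 m, wilkinsonWeight m k) * h m := by
        rw [sum_mul, ← sum_add_distrib]
        refine sum_congr rfl fun k hk => ?_
        rw [← Ico_add_one_right_eq_Icc, sum_Ico_succ_top (mem_Ico.1 hk).2.le, mul_add, mul_sum]
    _ = ∑ i ∈ Ico 1 m, (∑ k ∈ Ico 1 (i + 1), wilkinsonWeight m k) * h i + h m := by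
        rw [sum_Ico_wilkinsonWeight hm le_rfl, sub_self, zero_add, div_one, one_mul]
        simp_rw [sum_mul]
        congr 1
        refine sum_comm' fun k i => ?_
        simp only [mem_Ico]
        omega
    _ = _ := by
        rw [add_comm]
        refine congrArg _ (sum_congr rfl fun i hi => ?_)
        rw [sum_Ico_wilkinsonWeight (by linarith [(mem_Ico.1 hi).1]) (mem_Ico.1 hi).2]
        push_cast
        ring

lemma sum_wilkinsonWeight_mul_sum_Icc_sub {m : ℕ} (hm : 2 ≤ m) (x : ℕ → ℝ) :
    ∑ k ∈ Ico 1 m, wilkinsonWeight m k * ∑ j ∈ Icc k m, (x j - x k) = x m - x 1 := by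
  have hterm : ∀ k ∈ Ico 1 m, wilkinsonWeight m k * ∑ j ∈ Icc k m, (x j - x k)
      = wilkinsonWeight m k * ∑ j ∈ Icc k m, x j
        - (x k / ((m : ℝ) - k) + if k = 1 then x k else 0) := by
    intro k hk
    have hcard : ((m + 1 - k : ℕ) : ℝ) = (m : ℝ) - k + 1 := by
      rw [Nat.cast_sub (by linarith [(mem_Ico.1 hk).2])]; push_cast; ring
    have hw := wilkinsonWeight_mul_sub_add_one hk
    rw [sum_sub_distrib, sum_const, Nat.card_Icc, nsmul_eq_mul, hcard]
    split_ifs at hw ⊢ <;> linear_combination (-x k) * hw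
  rw [sum_congr rfl hterm, sum_sub_distrib, sum_wilkinsonWeight_mul_sum_Icc hm, sum_add_distrib,
    sum_ite_eq' (Ico 1 m) 1, if_pos (left_mem_Ico.2 (by omega))]
  ring

lemma sum_wilkinsonWeight_mul_sub_le {m : ℕ} (hm : 2 ≤ m) :
    ∑ k ∈ Ico 1 m, wilkinsonWeight m k * ((m : ℝ) - k) ≤ 1 + log ((m : ℝ) - 1) := by
  have hharmonic : ∑ k ∈ Ico 1 m, 1 / ((m : ℝ) - k) = harmonic (m - 1) := by
    rw [harmonic_eq_sum_Icc]
    push_cast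
    have hIcc : Icc 1 (m - 1) = Ico 1 m := by ext; simp only [mem_Icc, mem_Ico]; omega
    have hreflect := sum_Ico_reflect (fun j : ℕ => ((j : ℝ))⁻¹) 1 (Nat.le_succ m)
    rw [Nat.add_sub_cancel_left, Nat.add_sub_cancel] at hreflect
    rw [hIcc, ← hreflect]
    exact sum_congr rfl fun k hk => by
      rw [Nat.cast_sub (mem_Ico.1 hk).2.le, one_div]
  have hsum : ∑ k ∈ Ico 1 m, wilkinsonWeight m k * ((m : ℝ) - k) = harmonic (m - 1) := by
    calc _ = ∑ k ∈ Ico 1 m, (wilkinsonWeight m k * ((m : ℝ) - k + 1) - wilkinsonWeight m k) :=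
          sum_congr rfl fun k _ => by ring
      _ = _ := by
          rw [sum_sub_distrib, sum_congr rfl fun k hk => wilkinsonWeight_mul_sub_add_one hk,
            sum_add_distrib, hharmonic, sum_ite_eq' (Ico 1 m) 1, if_pos (left_mem_Ico.2 (by omega)),
            sum_Ico_wilkinsonWeight hm le_rfl]
          simp
  rw [hsum]
  have := harmonic_le_one_add_log (m - 1)
  rwa [Nat.cast_sub (by omega), Nat.cast_one] at this

theorem sub_le_of_sum_Icc_sub_le {m : ℕ} (hm : 2 ≤ m) {x h : ℕ → ℝ} {a : ℝ} (ha : 0 ≤ a)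
    (hx : ∀ k ∈ Ico 1 m,
      ∑ j ∈ Icc k m, (x j - x k) ≤ ((m : ℝ) - k) * a + (∑ i ∈ Icc k m, h i) / 2) :
    x m - x 1 ≤ (1 + log ((m : ℝ) - 1)) * a + (h m + ∑ i ∈ Ico 1 m, h i / ((m : ℝ) - i)) / 2 :=
  calc x m - x 1 = ∑ k ∈ Ico 1 m, wilkinsonWeight m k * ∑ j ∈ Icc k m, (x j - x k) :=
        (sum_wilkinsonWeight_mul_sum_Icc_sub hm x).symm
    _ ≤ ∑ k ∈ Ico 1 m,
          wilkinsonWeight m k * (((m : ℝ) - k) * a + (∑ i ∈ Icc k m, h i) / 2) :=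
        sum_le_sum fun k hk =>
          mul_le_mul_of_nonneg_left (hx k hk) (wilkinsonWeight_nonneg (mem_Ico.1 hk).2)
    _ = (∑ k ∈ Ico 1 m, wilkinsonWeight m k * ((m : ℝ) - k)) * a
          + (∑ k ∈ Ico 1 m, wilkinsonWeight m k * ∑ i ∈ Icc k m, h i) / 2 := by
        rw [sum_mul, sum_div, ← sum_add_distrib]
        exact sum_congr rfl fun k _ => by ring
    _ ≤ _ := by
        rw [sum_wilkinsonWeight_mul_sum_Icc hm]
        gcongr
        exact sum_wilkinsonWeight_mul_sub_le hm

lemma factorial_sub_mul_prod_Icc {n k m : ℕ} (hkm : k ≤ m) (hmn : m ≤ n) :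
    ((n - m)! : ℝ) * ∏ i ∈ Icc k m, ((n : ℝ) - i + 1) = (n - k + 1)! := by
  induction m, hkm using Nat.le_induction with
  | base =>
    rw [Icc_self, prod_singleton, Nat.factorial_succ, mul_comm]
    push_cast [Nat.cast_sub hmn]
    ring
  | succ m hkm ih =>
    rw [← ih (by omega), prod_Icc_succ_top (by omega), ← mul_assoc, mul_comm _ (_ - _ + 1),
      show n - m = n - (m + 1) + 1 by omega, Nat.factorial_succ]
    push_cast [Nat.cast_sub hmn]
    ring

lemma sum_log_sub_log_le_of_prod_le {n k m : ℕ} {τ : ℝ} {c : ℕ → ℝ} (hkm : k ≤ m) (hmn : m ≤ n)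
    (hτ : 0 < τ) (hc : ∀ j ∈ Icc k m, 0 < c j)
    (h : ∏ j ∈ Icc k m, c j ≤
      τ ^ (m - k) * √(((n - k + 1)! : ℝ) / (n - m)!) * c k ^ (m - k + 1)) :
    ∑ j ∈ Icc k m, (log (c j) - log (c k))
      ≤ ((m : ℝ) - k) * log τ + (∑ i ∈ Icc k m, log ((n : ℝ) - i + 1)) / 2 := by
  have hck : 0 < c k := hc k (left_mem_Icc.2 hkm)
  have hfactor : ∀ i ∈ Icc k m, 0 < (n : ℝ) - i + 1 := fun i hi => by
    have : (i : ℝ) ≤ n := by exact_mod_cast (mem_Icc.1 hi).2.trans hmn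
    linarith
  have hprod : 0 < ∏ i ∈ Icc k m, ((n : ℝ) - i + 1) := prod_pos hfactor
  rw [← factorial_sub_mul_prod_Icc hkm hmn, mul_div_cancel_left₀ _ (by positivity)] at h
  have hlog := log_le_log (prod_pos hc) h
  rw [log_prod fun j hj => (hc j hj).ne', log_mul (by positivity) (by positivity),
    log_mul (by positivity) (sqrt_pos.2 hprod).ne', log_pow, log_pow, log_sqrt hprod.le,
    log_prod fun i hi => (hfactor i hi).ne'] at hlog
  rw [sum_sub_distrib, sum_const, Nat.card_Icc, nsmul_eq_mul]
  push_cast [Nat.cast_sub hkm, Nat.cast_sub (hkm.trans (Nat.le_succ m))] at hlog ⊢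
  linarith

lemma genWilkinson_pos (m : ℕ) {t : ℝ} (ht : -2 < t) : 0 < genWilkinson m t :=
  sqrt_pos.2 <| prod_pos fun k hk => rpow_pos_of_pos (by
    have : (2 : ℝ) ≤ k := by exact_mod_cast (mem_Icc.1 hk).1
    linarith) _

lemma log_genWilkinson (m : ℕ) {t : ℝ} (ht : -2 < t) :
    log (genWilkinson m t) = (∑ i ∈ Ico 1 m, log ((m : ℝ) + t - i + 1) / ((m : ℝ) - i)) / 2 := by
  have hbase : ∀ k ∈ Icc 2 m, 0 < (k : ℝ) + t := fun k hk => by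
    have : (2 : ℝ) ≤ k := by exact_mod_cast (mem_Icc.1 hk).1
    linarith
  rw [genWilkinson, log_sqrt (prod_pos fun k hk => rpow_pos_of_pos (hbase k hk) _).le,
    log_prod fun k hk => (rpow_pos_of_pos (hbase k hk) _).ne']
  congr 1
  refine sum_nbij' (fun k => m + 1 - k) (fun i => m + 1 - i) ?_ ?_ ?_ ?_ fun k hk => ?_
  rotate_left 4
  · rw [log_rpow (hbase k hk), Nat.cast_sub (by linarith [(mem_Icc.1 hk).2])]
    push_cast
    rw [show (m : ℝ) + t - (m + 1 - k) + 1 = k + t by ring]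
    ring
  all_goals
    intro k hk
    simp only [mem_Icc, mem_Ico] at *
    omega

/-- core combinatorial inequality of the GERCP column
growth proof.  If positive reals `c_1,…,c_n` satisfy, for all
`1 ≤ k ≤ m ≤ n`,
`∏_{j=k}^m c_j ≤ τ^{m−k}·√((n−k+1)!/(n−m)!)·c_k^{m−k+1}`,
then for every `1 < m ≤ n`,
`c_m/c_1 ≤ √(n−m+1)·f(m,n−m)·τ·(m−1)^{ln τ}`. -/
theorem stmt13 (n : ℕ) (hn : 1 ≤ n) (τ : ℝ) (hτ : 1 ≤ τ)
    (c : ℕ → ℝ) (hc : ∀ i, 1 ≤ i → i ≤ n → 0 < c i)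
    (hyp : ∀ k m : ℕ, 1 ≤ k → k ≤ m → m ≤ n →
      ∏ j ∈ Finset.Icc k m, c j ≤
        τ ^ (m - k) * Real.sqrt ((Nat.factorial (n - k + 1) : ℝ) /
          (Nat.factorial (n - m) : ℝ)) * c k ^ (m - k + 1)) :
    ∀ m : ℕ, 1 < m → m ≤ n →
      c m / c 1 ≤ Real.sqrt ((n - m + 1 : ℕ) : ℝ) * genWilkinson m ((n - m : ℕ) : ℝ) *
        τ * ((m : ℝ) - 1) ^ Real.log τ := by
  intro m hm hmn
  have hτ0 : 0 < τ := by linarith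
  have hm1 : (0 : ℝ) < m - 1 := by
    have : (2 : ℝ) ≤ m := by exact_mod_cast hm
    linarith
  have ht : (-2 : ℝ) < (n - m : ℕ) := by linarith [(Nat.cast_nonneg (n - m) : (0 : ℝ) ≤ _)]
  have hbound := sub_le_of_sum_Icc_sub_le (x := fun j => log (c j))
    (h := fun i => log ((n : ℝ) - i + 1)) hm (log_nonneg hτ) fun k hk =>
      sum_log_sub_log_le_of_prod_le (mem_Ico.1 hk).2.le hmn hτ0
        (fun j hj => hc j (by linarith [(mem_Ico.1 hk).1, (mem_Icc.1 hj).1])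
          (by linarith [(mem_Icc.1 hj).2]))
        (hyp k m (mem_Ico.1 hk).1 (mem_Ico.1 hk).2.le hmn)
  have hc1 := hc 1 le_rfl hn
  have hcm := hc m (by omega) hmn
  have hsqrt : 0 < √((n - m + 1 : ℕ) : ℝ) := sqrt_pos.2 (by positivity)
  have hwilk := genWilkinson_pos m ht
  have hpow := rpow_pos_of_pos hm1 (log τ)
  rw [← log_le_log_iff (div_pos hcm hc1) (mul_pos (mul_pos (mul_pos hsqrt hwilk) hτ0) hpow),
    log_div hcm.ne' hc1.ne',
    log_mul (mul_pos (mul_pos hsqrt hwilk) hτ0).ne' hpow.ne',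
    log_mul (mul_pos hsqrt hwilk).ne' hτ0.ne', log_mul hsqrt.ne' hwilk.ne',
    log_sqrt (by positivity), log_rpow hm1, log_genWilkinson m ht,
    show (m : ℝ) + ((n - m : ℕ) : ℝ) = n by push_cast [Nat.cast_sub hmn]; ring]
  push_cast [Nat.cast_sub hmn] at hbound ⊢
  linarith
end

section
/- Let n ≥ 1 and let B ∈ ℝ^{n×n} be the upper triangular matrix with B(i,i) = 1, B(i,j) = −1/(n−i+1) for i < j, and B(i,j) = 0 for i > j. Then B is invertible and its inverse is the upper triangular matrix C with C(i,i) = 1, C(i,j) = 1/(n−j+2) for i < j, and C(i,j) = 0 for i > j; that is, B·C = C·B = I. -/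
/-! Write `B = 1 + U` and `C = 1 + V`, where `U` has the constant `a i = -1/(n-i)` strictly
right of the diagonal in row `i` and `V` has the constant `b j = 1/(n-j+1)` strictly above the
diagonal in column `j`. Then `(U V) i j = (j-i-1) a i b j`, so for `i < j` the `(i, j)` entry
of `U + V + U V` is `a i + b j + (j-i-1) a i b j`, which vanishes for these `a`, `b`.
Hence `B C = (1 + U)(1 + V) = 1`, and a one-sided inverse of a square matrix is two-sided. -/

open Finset

namespace Matrix

variable {ι R : Type*} [Fintype ι] [LinearOrder ι] [LocallyFiniteOrder ι]

def strictUpperRowConst [Zero R] (a : ι → R) : Matrix ι ι R :=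
  of fun i j => if i < j then a i else 0

def strictUpperColConst [Zero R] (b : ι → R) : Matrix ι ι R :=
  of fun i j => if i < j then b j else 0

theorem strictUpperRowConst_mul_strictUpperColConst_apply [NonUnitalNonAssocSemiring R]
    (a b : ι → R) (i j : ι) :
    (strictUpperRowConst a * strictUpperColConst b) i j = #(Ioo i j) • (a i * b j) := by
  simp only [mul_apply, strictUpperRowConst, strictUpperColConst, of_apply,
    ite_zero_mul_ite_zero]
  rw [← sum_filter, filter_lt_lt_eq_Ioo, sum_const]

end Matrix

open Matrix

theorem neg_one_div_add_one_div_add_mul_eq_zero {n i j : ℕ} (hij : i < j) (hjn : j < n) :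
    -1 / ((n : ℝ) - i) + 1 / ((n : ℝ) - j + 1)
      + ((j - i - 1 : ℕ) : ℝ) * (-1 / ((n : ℝ) - i) * (1 / ((n : ℝ) - j + 1))) = 0 := by
  have hi : (n : ℝ) - i ≠ 0 := by
    have : (i : ℝ) < n := by exact_mod_cast hij.trans hjn
    linarith
  have hj : (n : ℝ) - j + 1 ≠ 0 := by
    have : (j : ℝ) < n := by exact_mod_cast hjn
    linarith
  rw [Nat.cast_sub (by omega), Nat.cast_sub hij.le]
  field_simp
  push_cast
  ring

theorem stmt15_general (n : ℕ) (B C : Matrix (Fin n) (Fin n) ℝ)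
    (hB : ∀ i j, B i j =
      if i = j then 1 else if i < j then -1 / ((n : ℝ) - i.val) else 0)
    (hC : ∀ i j, C i j =
      if i = j then 1 else if i < j then 1 / ((n : ℝ) - j.val + 1) else 0) :
    IsUnit B ∧ B * C = 1 ∧ C * B = 1 := by
  set U := strictUpperRowConst fun i : Fin n => -1 / ((n : ℝ) - i.val)
  set V := strictUpperColConst fun j : Fin n => 1 / ((n : ℝ) - j.val + 1)
  have hBU : B = 1 + U := by
    ext i j
    rw [hB, Matrix.add_apply, one_apply]
    split_ifs <;> simp_all [U, strictUpperRowConst]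
  have hCV : C = 1 + V := by
    ext i j
    rw [hC, Matrix.add_apply, one_apply]
    split_ifs <;> simp_all [V, strictUpperColConst]
  have hUV : U + V + U * V = 0 := by
    ext i j
    rw [Matrix.add_apply, Matrix.add_apply, strictUpperRowConst_mul_strictUpperColConst_apply]
    by_cases hij : i < j
    · simpa [U, V, strictUpperRowConst, strictUpperColConst, hij]
        using neg_one_div_add_one_div_add_mul_eq_zero hij j.isLt
    · simp [U, V, strictUpperRowConst, strictUpperColConst, hij]
  have hBC : B * C = 1 :=
    calc B * C = 1 + (U + V + U * V) := by rw [hBU, hCV]; noncomm_ring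
      _ = 1 := by rw [hUV, add_zero]
  have hCB : C * B = 1 := mul_eq_one_comm.mp hBC
  exact ⟨⟨⟨B, C, hBC, hCB⟩, rfl⟩, hBC, hCB⟩

/-- special matrix inverse.
Let `B ∈ ℝ^{n×n}` be upper triangular with `B(i,i) = 1` and
`B(i,j) = −1/(n−i+1)` for `i < j` (with 1-based indexing, i.e.
`−1/(n − i.val)` for 0-based `i`).  Then `B` is invertible with inverse the
upper triangular matrix `C` with `C(i,i) = 1` and `C(i,j) = 1/(n−j+2)` for
`i < j` (0-based: `1/(n − j.val + 1)`); i.e. `B·C = C·B = 1`. -/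
theorem stmt15 (n : ℕ) (hn : 1 ≤ n) (B C : Matrix (Fin n) (Fin n) ℝ)
    (hB : ∀ i j, B i j =
      if i = j then 1 else if i < j then -1 / ((n : ℝ) - i.val) else 0)
    (hC : ∀ i j, C i j =
      if i = j then 1 else if i < j then 1 / ((n : ℝ) - j.val + 1) else 0) :
    IsUnit B ∧ B * C = 1 ∧ C * B = 1 :=
  stmt15_general n B C hB hC
end

section
/- Let m ≥ 2 be an integer and t ≥ 0 a real number, and let f(m,t) = √( (2+t)·(3+t)^{1/2}·(4+t)^{1/3} ··· (m+t)^{1/(m−1)} ). Then f(m,t) ≤ √(e·(t+2)·(t+1)) · m^{(1/4)·ln(m+t)} · m^{(1/4)·ln((m+t)/m)} · (t+1)^{(1/4)·ln(t+1)}. -/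
open Real Finset intervalIntegral
open MeasureTheory (volume)

lemma log_add_le_log_add_div {x y : ℝ} (hx : 0 < x) (hy : 0 ≤ y) :
    log (x + y) ≤ log x + y / x := by
  have h := log_le_sub_one_of_pos (show 0 < (x + y) / x by positivity)
  rw [log_div (by positivity) hx.ne'] at h
  have : (x + y) / x - 1 = y / x := by field_simp; ring
  linarith

lemma log_add_div_antitoneOn {s : ℝ} (hs : 1 ≤ s) :
    AntitoneOn (fun u => log (u + s) / u) (Set.Ioi 0) := by
  intro u (hu : 0 < u) v (hv : 0 < v) huv
  have hus : 0 < u + s := by linarith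
  have h_step : log (v + s) ≤ log (u + s) + (v - u) / (u + s) := by
    simpa only [show v + s = u + s + (v - u) by ring] using
      log_add_le_log_add_div hus (sub_nonneg.2 huv)
  have h_slope : u / (u + s) ≤ log (u + s) := by
    refine le_trans ?_ (one_sub_inv_le_log_of_pos hus)
    rw [div_le_iff₀ hus, sub_mul, inv_mul_cancel₀ hus.ne']
    linarith
  show log (v + s) / v ≤ log (u + s) / u
  rw [div_le_div_iff₀ hv hu]
  calc log (v + s) * u ≤ (log (u + s) + (v - u) / (u + s)) * u := by gcongr
    _ = log (u + s) * u + (v - u) * (u / (u + s)) := by ring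
    _ ≤ log (u + s) * u + (v - u) * log (u + s) := by gcongr
    _ = log (u + s) * v := by ring

lemma intervalIntegrable_log_add_div {s a b : ℝ} (hs : 0 ≤ s) (ha : 0 < a) (hab : a ≤ b) :
    IntervalIntegrable (fun u => log (u + s) / u) volume a b := by
  refine ContinuousOn.intervalIntegrable ?_
  rw [Set.uIcc_of_le hab]
  have hpos : ∀ u ∈ Set.Icc a b, 0 < u := fun u hu => ha.trans_le hu.1
  exact ContinuousOn.div (ContinuousOn.log (by fun_prop) fun u hu => by linarith [hpos u hu])
    continuousOn_id fun u hu => (hpos u hu).ne'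

lemma intervalIntegrable_log_add_div_div {s a b : ℝ} (ha : 0 < a) (hab : a ≤ b) :
    IntervalIntegrable (fun u => (log u + s / u) / u) volume a b := by
  refine ContinuousOn.intervalIntegrable ?_
  rw [Set.uIcc_of_le hab]
  have hu : ∀ u ∈ Set.Icc a b, u ≠ 0 := fun u hu => (ha.trans_le hu.1).ne'
  exact ContinuousOn.div (ContinuousOn.add (continuousOn_log.mono hu)
    (continuousOn_const.div continuousOn_id hu)) continuousOn_id hu

lemma integral_log_add_div_div {s a b : ℝ} (ha : 0 < a) (hab : a ≤ b) :
    ∫ u in a..b, (log u + s / u) / u = (log b ^ 2 - log a ^ 2) / 2 + (s / a - s / b) := by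
  rw [integral_eq_sub_of_hasDerivAt (f := fun u => log u ^ 2 / 2 - s / u)]
  · ring
  · intro u hu
    rw [Set.uIcc_of_le hab] at hu
    have hu : u ≠ 0 := (ha.trans_le hu.1).ne'
    convert (((hasDerivAt_log hu).pow 2).div_const 2).sub
      ((hasDerivAt_inv hu).const_mul s) using 1
    · funext v
      simp only [Pi.sub_apply, Pi.pow_apply, div_eq_mul_inv]
    · field_simp
      ring
  · exact intervalIntegrable_log_add_div_div ha hab

lemma integral_log_add_div_le_of_le {s x : ℝ} (hx : 1 ≤ x) (hxs : x ≤ s) :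
    ∫ u in 1..x, log (u + s) / u ≤ log (2 * s) * log x := by
  have hinv : IntervalIntegrable (fun u => log (2 * s) * u⁻¹) volume 1 x := by
    refine (intervalIntegrable_inv (fun u hu => ?_) continuousOn_id).const_mul _
    rw [Set.uIcc_of_le hx] at hu
    exact (show (0 : ℝ) < u by linarith [hu.1]).ne'
  calc ∫ u in 1..x, log (u + s) / u
      ≤ ∫ u in 1..x, log (2 * s) * u⁻¹ := by
        refine integral_mono_on hx
          (intervalIntegrable_log_add_div (by linarith) one_pos hx) hinv
          fun u hu => ?_
        rw [← div_eq_mul_inv]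
        gcongr
        · linarith [hu.1]
        · linarith [hu.1]
        · linarith [hu.2]
    _ = log (2 * s) * log x := by
        rw [integral_const_mul, integral_inv_of_pos one_pos (by linarith), div_one]

lemma integral_log_add_div_le_of_ge {s N : ℝ} (hs : 0 < s) (hsN : s ≤ N) :
    ∫ u in s..N, log (u + s) / u ≤ (log N ^ 2 - log s ^ 2) / 2 + 1 := by
  calc ∫ u in s..N, log (u + s) / u
      ≤ ∫ u in s..N, (log u + s / u) / u := by
        refine integral_mono_on hsN (intervalIntegrable_log_add_div hs.le hs hsN) ?_
          fun u hu => ?_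
        · exact intervalIntegrable_log_add_div_div hs hsN
        · have hu : 0 < u := hs.trans_le hu.1
          gcongr
          exact log_add_le_log_add_div hu hs.le
    _ = (log N ^ 2 - log s ^ 2) / 2 + (1 - s / N) := by
        rw [integral_log_add_div_div hs hsN, div_self hs.ne']
    _ ≤ (log N ^ 2 - log s ^ 2) / 2 + 1 := by
        have : 0 ≤ s / N := div_nonneg hs.le (hs.trans_le hsN).le
        linarith

lemma integral_log_add_div_le {s N : ℝ} (hs : 1 ≤ s) (hN : 1 ≤ N) :
    ∫ u in 1..N, log (u + s) / u ≤ 1 + log s + (log s ^ 2 + log N ^ 2) / 2 := by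
  have hlog_two : log 2 ≤ 1 := by linarith [log_two_lt_d9]
  have hlog_two_mul : log (2 * s) = log 2 + log s := log_mul two_ne_zero (by linarith)
  have hlog_s : 0 ≤ log s := log_nonneg hs
  have hlog_N : 0 ≤ log N := log_nonneg hN
  rcases le_total N s with hNs | hsN
  · have hint := integral_log_add_div_le_of_le hN hNs
    have hNs' : log N ≤ log s := log_le_log (by linarith) hNs
    rw [hlog_two_mul] at hint
    nlinarith [sq_nonneg (log s - log N)]
  · rw [← integral_add_adjacent_intervals (b := s)
      (intervalIntegrable_log_add_div (by linarith) one_pos hs)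
      (intervalIntegrable_log_add_div (by linarith) (by linarith) hsN)]
    have hint₁ := integral_log_add_div_le_of_le hs le_rfl
    have hint₂ := integral_log_add_div_le_of_ge (by linarith) hsN
    rw [hlog_two_mul] at hint₁
    nlinarith

lemma sum_log_add_div_le {s : ℝ} (hs : 1 ≤ s) (n : ℕ) :
    ∑ i ∈ range n, log ((i : ℝ) + 2 + s) / ((i : ℝ) + 2) ≤
      1 + log s + (log s ^ 2 + log ((n : ℝ) + 1) ^ 2) / 2 := by
  have hanti : AntitoneOn (fun u => log (u + s) / u) (Set.Icc 1 (1 + n)) :=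
    (log_add_div_antitoneOn hs).mono fun u hu => one_pos.trans_le hu.1
  calc ∑ i ∈ range n, log ((i : ℝ) + 2 + s) / ((i : ℝ) + 2)
      = ∑ i ∈ range n, log ((1 + ((i + 1 : ℕ) : ℝ)) + s) / (1 + ((i + 1 : ℕ) : ℝ)) := by
        refine sum_congr rfl fun i _ => ?_
        push_cast
        rw [show (i : ℝ) + 2 = 1 + (i + 1) by ring]
    _ ≤ ∫ u in 1..1 + n, log (u + s) / u := hanti.sum_le_integral
    _ ≤ 1 + log s + (log s ^ 2 + log ((n : ℝ) + 1) ^ 2) / 2 := by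
        rw [add_comm 1 (n : ℝ)]
        exact integral_log_add_div_le hs (by linarith [n.cast_nonneg (α := ℝ)])

lemma sum_Icc_one_div_sub_one_mul_log_add_le (n : ℕ) {t : ℝ} (ht : 0 ≤ t) :
    ∑ k ∈ Icc 2 (n + 2), 1 / ((k : ℝ) - 1) * log ((k : ℝ) + t) ≤
      log (t + 2) + 1 + log (t + 1) + (log (t + 1) ^ 2 + log ((n : ℝ) + 1) ^ 2) / 2 := by
  have hsplit : ∑ k ∈ Icc 2 (n + 2), 1 / ((k : ℝ) - 1) * log ((k : ℝ) + t) =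
      log (t + 2) + ∑ i ∈ range n, log ((i : ℝ) + 2 + (t + 1)) / ((i : ℝ) + 2) := by
    rw [← Finset.Ico_add_one_right_eq_Icc, sum_Ico_eq_sum_range,
      show n + 2 + 1 - 2 = n + 1 by omega, sum_range_succ', add_comm]
    push_cast
    congr 1
    · norm_num [add_comm]
    · refine sum_congr rfl fun i _ => ?_
      ring_nf
  rw [hsplit]
  linarith [sum_log_add_div_le (s := t + 1) (by linarith) n]

lemma prod_Icc_rpow_eq_exp_sum (m : ℕ) {t : ℝ} (ht : -2 < t) :
    ∏ k ∈ Icc 2 m, ((k : ℝ) + t) ^ ((1 : ℝ) / ((k : ℝ) - 1)) =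
      exp (∑ k ∈ Icc 2 m, 1 / ((k : ℝ) - 1) * log ((k : ℝ) + t)) := by
  rw [exp_sum]
  refine prod_congr rfl fun k hk => ?_
  have hk : (2 : ℝ) ≤ k := by exact_mod_cast (mem_Icc.1 hk).1
  rw [rpow_def_of_pos (by linarith), mul_comm]

lemma wilkinson_bound_eq_sqrt_exp {M t : ℝ} (hM : 0 < M) (ht : 0 ≤ t) :
    sqrt (exp 1 * (t + 2) * (t + 1)) * M ^ (1 / 4 * log (M + t)) *
        M ^ (1 / 4 * log ((M + t) / M)) * (t + 1) ^ (1 / 4 * log (t + 1)) =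
      sqrt (exp (1 + log (t + 2) + log (t + 1) + log M * log (M + t) - log M ^ 2 / 2 +
        log (t + 1) ^ 2 / 2)) := by
  have hprod : exp 1 * (t + 2) * (t + 1) = exp (1 + log (t + 2) + log (t + 1)) := by
    rw [exp_add, exp_add, exp_log (by linarith), exp_log (by linarith)]
  rw [hprod, ← exp_half, ← exp_half, rpow_def_of_pos hM, rpow_def_of_pos hM,
    rpow_def_of_pos (by linarith), log_div (by linarith) hM.ne', ← exp_add, ← exp_add,
    ← exp_add]
  ring_nf

/-- generalized Wilkinson function bound.
For an integer `m ≥ 2` and a real `t ≥ 0`,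
`f(m,t) ≤ √(e·(t+2)·(t+1)) · m^{(1/4)ln(m+t)} · m^{(1/4)ln((m+t)/m)} ·
(t+1)^{(1/4)ln(t+1)}`. -/
theorem stmt16 (m : ℕ) (hm : 2 ≤ m) (t : ℝ) (ht : 0 ≤ t) :
    genWilkinson m t ≤
      Real.sqrt (Real.exp 1 * (t + 2) * (t + 1)) *
        (m : ℝ) ^ ((1 / 4 : ℝ) * Real.log ((m : ℝ) + t)) *
        (m : ℝ) ^ ((1 / 4 : ℝ) * Real.log (((m : ℝ) + t) / m)) *
        (t + 1) ^ ((1 / 4 : ℝ) * Real.log (t + 1)) := by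
  obtain ⟨n, rfl⟩ : ∃ n, m = n + 2 := ⟨m - 2, by omega⟩
  have hM : (2 : ℝ) ≤ ((n + 2 : ℕ) : ℝ) := by exact_mod_cast Nat.le_add_left 2 n
  have hlog_n : log ((n : ℝ) + 1) ≤ log ((n + 2 : ℕ) : ℝ) :=
    log_le_log (by positivity) (by push_cast; linarith)
  have hlog_M : log ((n + 2 : ℕ) : ℝ) ≤ log (((n + 2 : ℕ) : ℝ) + t) :=
    log_le_log (by linarith) (by linarith)
  have hlog_n_nonneg : 0 ≤ log ((n : ℝ) + 1) :=
    log_nonneg (by linarith [n.cast_nonneg (α := ℝ)])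
  rw [genWilkinson, prod_Icc_rpow_eq_exp_sum _ (by linarith),
    wilkinson_bound_eq_sqrt_exp (by linarith) ht]
  refine sqrt_le_sqrt (exp_le_exp.2 ?_)
  refine (sum_Icc_one_div_sub_one_mul_log_add_le n ht).trans ?_
  nlinarith
end

section
/- For every real c ≥ 1, the improper integral ∫_1^∞ (c·ln(x))/(x·(x+c)) dx is at most (1/2)·ln²(c) + ln(c) + 1. -/
open MeasureTheory

/-!
The integrand is dominated by `ln x / x` (as `c ≤ x + c`) and by `c ln x / x²` (as `x ≤ x + c`).
Use the first bound on `(1, c]`, where `ln² x / 2` is a primitive, and the second on `(c, ∞)`,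
where `-c (ln x + 1) / x` is a primitive vanishing at infinity: the two pieces contribute
at most `ln² c / 2` and `ln c + 1`.
-/

open Real Set Filter Topology

lemma hasDerivAt_log_sq_div_two {x : ℝ} (hx : x ≠ 0) :
    HasDerivAt (fun y => log y ^ 2 / 2) (log x / x) x := by
  refine (((hasDerivAt_log hx).fun_pow 2).div_const 2).congr_deriv ?_
  field_simp
  norm_num

section LogDivSelf

variable {a b : ℝ}

lemma pos_of_mem_uIcc (ha : 0 < a) (hb : 0 < b) {x : ℝ} (hx : x ∈ uIcc a b) : 0 < x :=
  (lt_min ha hb).trans_le hx.1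

lemma intervalIntegrable_log_div_self (ha : 0 < a) (hb : 0 < b) :
    IntervalIntegrable (fun x => log x / x) volume a b :=
  ContinuousOn.intervalIntegrable fun _ hx =>
    have hx0 := (pos_of_mem_uIcc ha hb hx).ne'
    ((continuousAt_log hx0).div continuousAt_id hx0).continuousWithinAt

lemma integral_log_div_self (ha : 0 < a) (hb : 0 < b) :
    ∫ x in a..b, log x / x = (log b ^ 2 - log a ^ 2) / 2 := by
  rw [intervalIntegral.integral_eq_sub_of_hasDerivAt
    (fun x hx => hasDerivAt_log_sq_div_two (pos_of_mem_uIcc ha hb hx).ne')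
    (intervalIntegrable_log_div_self ha hb)]
  ring

end LogDivSelf

lemma hasDerivAt_neg_log_add_one_div {x : ℝ} (hx : x ≠ 0) :
    HasDerivAt (fun y => -(log y + 1) / y) (log x / x ^ 2) x := by
  refine (((hasDerivAt_log hx).add_const 1).fun_neg.fun_div (hasDerivAt_id' x) hx).congr_deriv ?_
  field_simp
  ring

lemma tendsto_neg_log_add_one_div_atTop :
    Tendsto (fun y => -(log y + 1) / y) atTop (𝓝 0) := by
  have h := (isLittleO_log_id_atTop.tendsto_div_nhds_zero.add tendsto_inv_atTop_zero).neg
  rw [add_zero, neg_zero] at h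
  exact h.congr fun y => by simp only [id]; ring

section LogDivSq

variable {a : ℝ}

lemma log_div_sq_nonneg {x : ℝ} (hx : 1 ≤ x) : 0 ≤ log x / x ^ 2 :=
  div_nonneg (log_nonneg hx) (sq_nonneg x)

lemma integrableOn_Ioi_log_div_sq (ha : 1 ≤ a) :
    IntegrableOn (fun x => log x / x ^ 2) (Ioi a) :=
  integrableOn_Ioi_deriv_of_nonneg'
    (fun x hx => hasDerivAt_neg_log_add_one_div (by linarith [mem_Ici.mp hx]))
    (fun x hx => log_div_sq_nonneg (ha.trans (le_of_lt hx))) tendsto_neg_log_add_one_div_atTop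

lemma integral_Ioi_log_div_sq (ha : 1 ≤ a) :
    ∫ x in Ioi a, log x / x ^ 2 = (log a + 1) / a := by
  rw [integral_Ioi_of_hasDerivAt_of_nonneg'
    (fun x hx => hasDerivAt_neg_log_add_one_div (by linarith [mem_Ici.mp hx]))
    (fun x hx => log_div_sq_nonneg (ha.trans (le_of_lt hx))) tendsto_neg_log_add_one_div_atTop]
  ring

end LogDivSq

section Integrand

variable {c x : ℝ}

lemma mul_log_div_mul_add_nonneg (hc : 0 ≤ c) (hx : 1 ≤ x) :
    0 ≤ c * log x / (x * (x + c)) := by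
  have := log_nonneg hx
  positivity

lemma mul_log_div_mul_add_le_log_div (hc : 0 ≤ c) (hx : 1 ≤ x) :
    c * log x / (x * (x + c)) ≤ log x / x := by
  have := log_nonneg hx
  rw [div_le_div_iff₀ (by positivity) (by positivity)]
  nlinarith [mul_nonneg this (mul_nonneg (by linarith : (0:ℝ) ≤ x) (by linarith : (0:ℝ) ≤ x))]

lemma mul_log_div_mul_add_le_mul_log_div_sq (hc : 0 ≤ c) (hx : 1 ≤ x) :
    c * log x / (x * (x + c)) ≤ c * (log x / x ^ 2) := by
  have := log_nonneg hx
  rw [mul_div_assoc]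
  gcongr
  nlinarith

lemma continuousOn_mul_log_div_mul_add (hc : 0 ≤ c) :
    ContinuousOn (fun x => c * log x / (x * (x + c))) (Ici 1) := by
  intro x hx
  have hx0 : 0 < x := zero_lt_one.trans_le hx
  exact (((continuousAt_log hx0.ne').const_mul c).div (by fun_prop)
    (by positivity)).continuousWithinAt

lemma integrableOn_Ioi_mul_log_div_mul_add (hc : 0 ≤ c) :
    IntegrableOn (fun x => c * log x / (x * (x + c))) (Ioi 1) := by
  refine ((integrableOn_Ioi_log_div_sq le_rfl).const_mul c).mono'
    ((continuousOn_mul_log_div_mul_add hc).mono Ioi_subset_Ici_self |>.aestronglyMeasurable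
      measurableSet_Ioi) ?_
  filter_upwards [ae_restrict_mem measurableSet_Ioi] with x hx
  rw [norm_of_nonneg (mul_log_div_mul_add_nonneg hc (le_of_lt hx))]
  exact mul_log_div_mul_add_le_mul_log_div_sq hc (le_of_lt hx)

end Integrand

/-- useful inequality for an improper integral.
For every real `c ≥ 1`,
`∫_1^∞ c·ln(x)/(x·(x+c)) dx ≤ (1/2)·ln²(c) + ln(c) + 1`. -/
theorem stmt17 (c : ℝ) (hc : 1 ≤ c) :
    ∫ x in Set.Ioi (1 : ℝ), c * Real.log x / (x * (x + c)) ≤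
      (1 / 2) * Real.log c ^ 2 + Real.log c + 1 := by
  have hc0 : 0 < c := zero_lt_one.trans_le hc
  have hf := integrableOn_Ioi_mul_log_div_mul_add hc0.le
  rw [← Ioc_union_Ioi_eq_Ioi hc, setIntegral_union (Ioc_disjoint_Ioi le_rfl) measurableSet_Ioi
    (hf.mono_set Ioc_subset_Ioi_self) (hf.mono_set (Ioi_subset_Ioi hc))]
  have h_near : ∫ x in Ioc 1 c, c * log x / (x * (x + c)) ≤ log c ^ 2 / 2 := calc
    _ = ∫ x in (1 : ℝ)..c, c * log x / (x * (x + c)) := (intervalIntegral.integral_of_le hc).symm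
    _ ≤ ∫ x in (1 : ℝ)..c, log x / x :=
      intervalIntegral.integral_mono_on hc
        ((intervalIntegrable_iff_integrableOn_Ioc_of_le hc).mpr (hf.mono_set Ioc_subset_Ioi_self))
        (intervalIntegrable_log_div_self one_pos hc0)
        fun x hx => mul_log_div_mul_add_le_log_div hc0.le hx.1
    _ = log c ^ 2 / 2 := by simp [integral_log_div_self one_pos hc0]
  have h_far : ∫ x in Ioi c, c * log x / (x * (x + c)) ≤ log c + 1 := calc
    _ ≤ ∫ x in Ioi c, c * (log x / x ^ 2) :=
      setIntegral_mono_on (hf.mono_set (Ioi_subset_Ioi hc))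
        ((integrableOn_Ioi_log_div_sq hc).const_mul c) measurableSet_Ioi
        fun x hx => mul_log_div_mul_add_le_mul_log_div_sq hc0.le (hc.trans (le_of_lt hx))
    _ = log c + 1 := by
      rw [integral_const_mul, integral_Ioi_log_div_sq hc]
      field_simp
  linarith
end
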